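/- Modal Kochen–Specker theorem: Let L be an orthomodular lattice and L^◇ a Boolean saturated modal extension of L with possibility space ◇L (the Boolean subalgebra of L^◇ generated by {◇P : P ∈ L}). Then L admits a global valuation if and only if for each possibility space there exists a Boolean homomorphism f : ◇L → 2 admitting a compatible actualization, i.e. a global valuation (v_i : W_i → 2) over the Boolean sublattices W_i of L with v_i agreeing with f on W_i ∩ ◇L for all i. -/

import Mathlib

/-- An orthomodular lattice: a bounded lattice with an involution `compl`
satisfying De Morgan, `x ⊓ compl x = ⊥`, and the orthomodular law. -/
class OML (α : Type*) extends Lattice α, BoundedOrder α where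
  compl : α → α
  compl_compl : ∀ x : α, compl (compl x) = x
  compl_sup : ∀ x y : α, compl (x ⊔ y) = compl x ⊓ compl y
  inf_compl : ∀ x : α, x ⊓ compl x = ⊥
  orthomodular : ∀ x y : α, x ⊔ (compl x ⊓ (x ⊔ y)) = x ⊔ y

/-- A Boolean saturated orthomodular lattice: an orthomodular lattice with a
possibility operator `dia` satisfying S1–S7. -/
class BSOML (α : Type*) extends OML α where
  dia : α → α
  S1 : ∀ x : α, x ≤ dia x
  S2 : dia ⊥ = ⊥
  S3 : ∀ x : α, dia (dia x) = dia x
  S4 : ∀ x y : α, dia (x ⊔ y) = dia x ⊔ dia y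
  S5 : ∀ x y : α, y = (y ⊓ dia x) ⊔ (y ⊓ compl (dia x))
  S6 : ∀ x y : α, dia (x ⊓ dia y) = dia x ⊓ dia y
  S7 : ∀ x y : α, compl (dia x) ⊓ dia y ≤ dia (compl x ⊓ (y ⊔ x))

/-- An element `z` is central iff `a = (a ⊓ z) ⊔ (a ⊓ compl z)` for all `a`. -/
def central {α : Type*} [OML α] (z : α) : Prop :=
  ∀ a : α, a = (a ⊓ z) ⊔ (a ⊓ OML.compl z)

/-- A Boolean subalgebra of `α`: a subset containing ⊥ and ⊤, closed under
orthocomplement, meet and join, on which the distributive law holds. -/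
def IsBoolSub {α : Type*} [OML α] (W : Set α) : Prop :=
  (⊥ : α) ∈ W ∧ (⊤ : α) ∈ W ∧ (∀ a ∈ W, OML.compl a ∈ W) ∧
  (∀ a ∈ W, ∀ b ∈ W, a ⊓ b ∈ W) ∧ (∀ a ∈ W, ∀ b ∈ W, a ⊔ b ∈ W) ∧
  (∀ a ∈ W, ∀ b ∈ W, ∀ c ∈ W, a ⊓ (b ⊔ c) = (a ⊓ b) ⊔ (a ⊓ c))

/-- `v` is a Boolean homomorphism from `W` to the two-element Boolean algebra. -/
def IsHomOn {α : Type*} [OML α] (W : Set α) (v : α → Bool) : Prop :=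
  v ⊥ = false ∧ v ⊤ = true ∧ (∀ a ∈ W, v (OML.compl a) = !(v a)) ∧
  (∀ a ∈ W, ∀ b ∈ W, v (a ⊓ b) = (v a && v b)) ∧
  (∀ a ∈ W, ∀ b ∈ W, v (a ⊔ b) = (v a || v b))

/-- A subset closed under the orthomodular lattice operations. -/
def ClosedUnderOps {α : Type*} [OML α] (S : Set α) : Prop :=
  (⊥ : α) ∈ S ∧ (⊤ : α) ∈ S ∧ (∀ a ∈ S, OML.compl a ∈ S) ∧
  (∀ a ∈ S, ∀ b ∈ S, a ⊓ b ∈ S) ∧ (∀ a ∈ S, ∀ b ∈ S, a ⊔ b ∈ S)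

/-- A global valuation: a family of Boolean homomorphisms, one for each Boolean
subalgebra, agreeing on overlaps. -/
def HasGlobalValuation (α : Type*) [OML α] : Prop :=
  ∃ v : ∀ W : Set α, IsBoolSub W → α → Bool,
    (∀ (W : Set α) (hW : IsBoolSub W), IsHomOn W (v W hW)) ∧
    (∀ (W₁ W₂ : Set α) (h₁ : IsBoolSub W₁) (h₂ : IsBoolSub W₂) (x : α),
      x ∈ W₁ → x ∈ W₂ → v W₁ h₁ x = v W₂ h₂ x)

/-!
Every element of the possibility space is central in `L^◇`, because each `◇P` is central (S5)
and the central elements form a Boolean subalgebra. Hence the possibility space is a Boolean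
algebra, and its preimage `C` under the embedding is a Boolean subalgebra of `L`. A global
valuation restricts to a homomorphism `C → 2`; the elements of the possibility space lying above
the image of a true element form a proper filter, which Zorn's lemma extends to an ultrafilter,
whose indicator is the required `f`. Agreement on overlaps transfers compatibility from `C` to
every `Wᵢ`. Conversely, the trivial modal structure `◇x = ⊤` for `x ≠ ⊥` turns any compatible
actualization into a global valuation.
-/

section Orthomodular

variable {γ : Type*} [OML γ]

lemma OML.compl_top : OML.compl (⊤ : γ) = ⊥ := by
  simpa using OML.inf_compl (⊤ : γ)

lemma OML.compl_bot : OML.compl (⊥ : γ) = ⊤ := by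
  rw [← OML.compl_top, OML.compl_compl]

lemma OML.compl_inf (a b : γ) : OML.compl (a ⊓ b) = OML.compl a ⊔ OML.compl b := by
  rw [← OML.compl_compl (OML.compl a ⊔ OML.compl b), OML.compl_sup, OML.compl_compl,
    OML.compl_compl]

lemma OML.sup_compl_inf_of_le {x y : γ} (h : x ≤ y) : x ⊔ (OML.compl x ⊓ y) = y := by
  simpa [sup_eq_right.mpr h] using OML.orthomodular x y

lemma OML.inf_compl_sup_of_le {z d : γ} (h : d ≤ z) : z ⊓ (OML.compl z ⊔ d) = d := by
  have hdisj : OML.compl d ⊓ (z ⊓ (OML.compl z ⊔ d)) = ⊥ := by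
    have hc : OML.compl (OML.compl z ⊔ d) = OML.compl d ⊓ z := by
      rw [OML.compl_sup, OML.compl_compl, inf_comm]
    rw [← inf_assoc, ← hc, inf_comm, OML.inf_compl]
  have hom := OML.sup_compl_inf_of_le (le_inf h le_sup_right : d ≤ z ⊓ (OML.compl z ⊔ d))
  rwa [hdisj, sup_bot_eq, eq_comm] at hom

end Orthomodular

section Central

variable {γ : Type*} [OML γ] {z w : γ}

lemma central_of_le (h : ∀ a : γ, a ≤ (a ⊓ z) ⊔ (a ⊓ OML.compl z)) : central z :=
  fun a => le_antisymm (h a) (sup_le inf_le_left inf_le_left)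

lemma central.le_compl_sup_inf (hz : central z) (b : γ) : b ≤ OML.compl z ⊔ (z ⊓ b) := by
  conv_lhs => rw [hz b]
  rw [inf_comm b z, sup_comm]
  exact sup_le_sup_right inf_le_right _

lemma central.inf_sup (hz : central z) (b c : γ) : z ⊓ (b ⊔ c) = (z ⊓ b) ⊔ (z ⊓ c) := by
  refine le_antisymm ?_ (sup_le (inf_le_inf_left z le_sup_left) (inf_le_inf_left z le_sup_right))
  have hbc : b ⊔ c ≤ OML.compl z ⊔ ((z ⊓ b) ⊔ (z ⊓ c)) :=
    sup_le ((hz.le_compl_sup_inf b).trans (sup_le_sup_left le_sup_left _))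
      ((hz.le_compl_sup_inf c).trans (sup_le_sup_left le_sup_right _))
  calc z ⊓ (b ⊔ c) ≤ z ⊓ (OML.compl z ⊔ ((z ⊓ b) ⊔ (z ⊓ c))) := inf_le_inf_left z hbc
    _ = (z ⊓ b) ⊔ (z ⊓ c) := OML.inf_compl_sup_of_le (sup_le inf_le_left inf_le_left)

lemma central.le_compl_of_inf_eq_bot (hz : central z) {u : γ} (h : u ⊓ z = ⊥) :
    u ≤ OML.compl z := by
  rw [hz u, h, bot_sup_eq]
  exact inf_le_right

lemma central_bot : central (⊥ : γ) := by
  intro a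
  simp [OML.compl_bot]

lemma central_top : central (⊤ : γ) := by
  intro a
  simp [OML.compl_top]

lemma central.compl (hz : central z) : central (OML.compl z) := by
  intro a
  rw [OML.compl_compl, sup_comm]
  exact hz a

lemma central.inf (hz : central z) (hw : central w) : central (z ⊓ w) := by
  refine central_of_le fun a => ?_
  rw [OML.compl_inf]
  calc a ≤ (a ⊓ z) ⊔ (a ⊓ OML.compl z) := (hz a).le
    _ ≤ ((a ⊓ z ⊓ w) ⊔ (a ⊓ z ⊓ OML.compl w)) ⊔ (a ⊓ OML.compl z) :=
        sup_le_sup_right (hw _).le _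
    _ ≤ (a ⊓ (z ⊓ w)) ⊔ (a ⊓ (OML.compl z ⊔ OML.compl w)) := by
        refine sup_le (sup_le ?_ ?_) ?_
        · rw [inf_assoc]
          exact le_sup_left
        · exact le_sup_of_le_right
            (le_inf (inf_le_left.trans inf_le_left) (inf_le_right.trans le_sup_right))
        · exact le_sup_of_le_right (inf_le_inf_left a le_sup_left)

lemma central.sup (hz : central z) (hw : central w) : central (z ⊔ w) := by
  have h := (hz.compl.inf hw.compl).compl
  rwa [OML.compl_inf, OML.compl_compl, OML.compl_compl] at h

lemma closedUnderOps_central : ClosedUnderOps {z : γ | central z} :=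
  ⟨central_bot, central_top, fun _ ha => ha.compl, fun _ ha _ hb => ha.inf hb,
    fun _ ha _ hb => ha.sup hb⟩

lemma central_dia {δ : Type*} [BSOML δ] (x : δ) : central (BSOML.dia x) :=
  fun a => BSOML.S5 x a

end Central

structure IsOMLEmbedding {α β : Type*} [OML α] [OML β] (e : α → β) : Prop where
  injective : Function.Injective e
  map_inf : ∀ x y : α, e (x ⊓ y) = e x ⊓ e y
  map_sup : ∀ x y : α, e (x ⊔ y) = e x ⊔ e y
  map_compl : ∀ x : α, e (OML.compl x) = OML.compl (e x)
  map_bot : e ⊥ = ⊥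
  map_top : e ⊤ = ⊤

lemma IsOMLEmbedding.isBoolSub_preimage {α β : Type*} [OML α] [OML β] {e : α → β}
    (he : IsOMLEmbedding e) {S : Set β} (hS : ClosedUnderOps S)
    (hcent : ∀ p ∈ S, central p) : IsBoolSub (e ⁻¹' S) := by
  obtain ⟨hbot, htop, hcompl, hinf, hsup⟩ := hS
  refine ⟨?_, ?_, fun a ha => ?_, fun a ha b hb => ?_, fun a ha b hb => ?_, ?_⟩
  · simpa [Set.mem_preimage, he.map_bot] using hbot
  · simpa [Set.mem_preimage, he.map_top] using htop
  · simpa [Set.mem_preimage, he.map_compl] using hcompl _ ha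
  · simpa [Set.mem_preimage, he.map_inf] using hinf _ ha _ hb
  · simpa [Set.mem_preimage, he.map_sup] using hsup _ ha _ hb
  · intro a ha b _ c _
    apply he.injective
    simp only [he.map_inf, he.map_sup]
    exact (hcent _ ha).inf_sup _ _

section Filter

variable {β : Type*}

structure IsProperFilterIn [Lattice β] [BoundedOrder β] (S F : Set β) : Prop where
  subset : F ⊆ S
  top_mem : ⊤ ∈ F
  bot_notMem : ⊥ ∉ F
  inf_mem : ∀ a ∈ F, ∀ b ∈ F, a ⊓ b ∈ F
  mem_of_le : ∀ a ∈ F, ∀ b ∈ S, a ≤ b → b ∈ F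

lemma IsProperFilterIn.sUnion [Lattice β] [BoundedOrder β] {S : Set β} {c : Set (Set β)}
    (hc : ∀ F ∈ c, IsProperFilterIn S F) (hchain : IsChain (· ⊆ ·) c) (hne : c.Nonempty) :
    IsProperFilterIn S (⋃₀ c) := by
  obtain ⟨F₀, hF₀⟩ := hne
  refine ⟨?_, ⟨F₀, hF₀, (hc F₀ hF₀).top_mem⟩, ?_, ?_, ?_⟩
  · rintro p ⟨F, hF, hp⟩
    exact (hc F hF).subset hp
  · rintro ⟨F, hF, hbot⟩
    exact (hc F hF).bot_notMem hbot
  · rintro a ⟨Fa, hFa, ha⟩ b ⟨Fb, hFb, hb⟩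
    rcases hchain.total hFa hFb with hle | hle
    · exact ⟨Fb, hFb, (hc Fb hFb).inf_mem _ (hle ha) _ hb⟩
    · exact ⟨Fa, hFa, (hc Fa hFa).inf_mem _ ha _ (hle hb)⟩
  · rintro a ⟨F, hF, ha⟩ b hb hab
    exact ⟨F, hF, (hc F hF).mem_of_le _ ha _ hb hab⟩

lemma IsProperFilterIn.exists_maximal [Lattice β] [BoundedOrder β] {S F₀ : Set β}
    (hF₀ : IsProperFilterIn S F₀) : ∃ U, F₀ ⊆ U ∧ Maximal (IsProperFilterIn S) U :=
  zorn_subset_nonempty {F | IsProperFilterIn S F}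
    (fun c hc hchain hne => ⟨⋃₀ c, IsProperFilterIn.sUnion hc hchain hne,
      fun _ => Set.subset_sUnion_of_mem⟩) F₀ hF₀

variable [OML β] {S U : Set β}

lemma IsProperFilterIn.adjoin (hU : IsProperFilterIn S U) (hS : ClosedUnderOps S) {a : β}
    (hdisj : ∀ u ∈ U, u ⊓ a ≠ ⊥) :
    IsProperFilterIn S {p | p ∈ S ∧ ∃ u ∈ U, u ⊓ a ≤ p} := by
  refine ⟨fun p hp => hp.1, ⟨hS.2.1, ⊤, hU.top_mem, inf_le_left⟩, ?_, ?_, ?_⟩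
  · rintro ⟨-, u, hu, hle⟩
    exact hdisj u hu (le_bot_iff.mp hle)
  · rintro p ⟨hp, u₁, hu₁, h₁⟩ q ⟨hq, u₂, hu₂, h₂⟩
    refine ⟨hS.2.2.2.1 _ hp _ hq, u₁ ⊓ u₂, hU.inf_mem _ hu₁ _ hu₂, le_inf ?_ ?_⟩
    · exact (inf_le_inf_right a inf_le_left).trans h₁
    · exact (inf_le_inf_right a inf_le_right).trans h₂
  · rintro p ⟨-, u, hu, h⟩ q hq hpq
    exact ⟨hq, u, hu, h.trans hpq⟩

lemma IsProperFilterIn.compl_mem_of_maximal (hU : Maximal (IsProperFilterIn S) U)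
    (hS : ClosedUnderOps S) (hcent : ∀ p ∈ S, central p) {a : β} (ha : a ∈ S) (haU : a ∉ U) :
    OML.compl a ∈ U := by
  by_contra hcU
  have hdisj : ∀ u ∈ U, u ⊓ a ≠ ⊥ := fun u hu hua =>
    hcU (hU.1.mem_of_le u hu _ (hS.2.2.1 a ha) ((hcent a ha).le_compl_of_inf_eq_bot hua))
  have hUle : U ⊆ {p | p ∈ S ∧ ∃ u ∈ U, u ⊓ a ≤ p} := fun u hu =>
    ⟨hU.1.subset hu, u, hu, inf_le_left⟩
  exact haU (hU.2 (hU.1.adjoin hS hdisj) hUle ⟨ha, ⊤, hU.1.top_mem, inf_le_right⟩)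

lemma IsProperFilterIn.compl_notMem (hU : IsProperFilterIn S U) {a : β} (ha : a ∈ U) :
    OML.compl a ∉ U := fun hc =>
  hU.bot_notMem (OML.inf_compl a ▸ hU.inf_mem _ ha _ hc)

lemma isHomOn_decide_mem_of_maximal [DecidablePred (· ∈ U)] (hU : Maximal (IsProperFilterIn S) U)
    (hS : ClosedUnderOps S) (hcent : ∀ p ∈ S, central p) : IsHomOn S (fun p => decide (p ∈ U)) := by
  have hF := hU.1
  have hcompl := fun a ha haU => IsProperFilterIn.compl_mem_of_maximal hU hS hcent (a := a) ha haU
  refine ⟨by simp [hF.bot_notMem], by simp [hF.top_mem], fun a ha => ?_, fun a ha b hb => ?_,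
    fun a ha b hb => ?_⟩
  · by_cases haU : a ∈ U
    · simp [haU, hF.compl_notMem haU]
    · simp [haU, hcompl a ha haU]
  · by_cases hab : a ⊓ b ∈ U
    · simp [hab, hF.mem_of_le _ hab _ ha inf_le_left, hF.mem_of_le _ hab _ hb inf_le_right]
    · by_cases haU : a ∈ U
      · have hbU : b ∉ U := fun hbU => hab (hF.inf_mem _ haU _ hbU)
        simp [hab, haU, hbU]
      · simp [hab, haU]
  · have hab : a ⊔ b ∈ S := hS.2.2.2.2 _ ha _ hb
    by_cases haU : a ∈ U
    · simp [haU, hF.mem_of_le _ haU _ hab le_sup_left]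
    by_cases hbU : b ∈ U
    · simp [hbU, hF.mem_of_le _ hbU _ hab le_sup_right]
    have hnab : OML.compl (a ⊔ b) ∈ U := by
      rw [OML.compl_sup]
      exact hF.inf_mem _ (hcompl a ha haU) _ (hcompl b hb hbU)
    have habU : a ⊔ b ∉ U := fun habU => hF.compl_notMem habU hnab
    simp [haU, hbU, habU]

lemma IsProperFilterIn.exists_isHomOn {F₀ : Set β} (hF₀ : IsProperFilterIn S F₀)
    (hS : ClosedUnderOps S) (hcent : ∀ p ∈ S, central p) :
    ∃ f : β → Bool, IsHomOn S f ∧ ∀ p ∈ F₀, f p = true := by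
  classical
  obtain ⟨U, hF₀U, hU⟩ := hF₀.exists_maximal
  exact ⟨_, isHomOn_decide_mem_of_maximal hU hS hcent, fun p hp => decide_eq_true (hF₀U hp)⟩

end Filter

section Extension

variable {α β : Type*} [OML α] [OML β] {e : α → β} {S : Set β} {g : α → Bool}

lemma IsOMLEmbedding.isProperFilterIn_above_image_true (he : IsOMLEmbedding e)
    (hS : ClosedUnderOps S) (hg : IsHomOn (e ⁻¹' S) g) :
    IsProperFilterIn S {p | p ∈ S ∧ ∃ x, e x ∈ S ∧ g x = true ∧ e x ≤ p} := by
  refine ⟨fun p hp => hp.1, ⟨hS.2.1, ⊤, he.map_top ▸ hS.2.1, hg.2.1, le_top⟩, ?_, ?_, ?_⟩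
  · rintro ⟨-, x, -, hgx, hle⟩
    have hx : x = ⊥ := he.injective (by rw [he.map_bot]; exact le_bot_iff.mp hle)
    rw [hx, hg.1] at hgx
    exact Bool.false_ne_true hgx
  · rintro p ⟨hp, x, hx, hgx, hxp⟩ q ⟨hq, y, hy, hgy, hyq⟩
    have hxy : e (x ⊓ y) ∈ S := by
      rw [he.map_inf]
      exact hS.2.2.2.1 _ hx _ hy
    refine ⟨hS.2.2.2.1 _ hp _ hq, x ⊓ y, hxy, ?_, ?_⟩
    · rw [hg.2.2.2.1 x hx y hy, hgx, hgy, Bool.and_self]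
    · rw [he.map_inf]
      exact inf_le_inf hxp hyq
  · rintro p ⟨-, x, hx, hgx, hxp⟩ q hq hpq
    exact ⟨hq, x, hx, hgx, hxp.trans hpq⟩

lemma IsOMLEmbedding.exists_isHomOn_extend (he : IsOMLEmbedding e) (hS : ClosedUnderOps S)
    (hcent : ∀ p ∈ S, central p) (hg : IsHomOn (e ⁻¹' S) g) :
    ∃ f : β → Bool, IsHomOn S f ∧ ∀ x, e x ∈ S → g x = f (e x) := by
  obtain ⟨f, hf, hf_true⟩ := (he.isProperFilterIn_above_image_true hS hg).exists_isHomOn hS hcent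
  refine ⟨f, hf, fun x hx => ?_⟩
  have hcx : e (OML.compl x) ∈ S := by
    rw [he.map_compl]
    exact hS.2.2.1 _ hx
  cases hgx : g x
  · have hgcx : g (OML.compl x) = true := by rw [hg.2.2.1 x hx, hgx, Bool.not_false]
    have hfcx := hf_true _ ⟨hcx, _, hcx, hgcx, le_rfl⟩
    rw [he.map_compl, hf.2.2.1 _ hx, Bool.not_eq_true'] at hfcx
    exact hfcx.symm
  · exact (hf_true _ ⟨hx, x, hx, hgx, le_rfl⟩).symm

end Extension

open Classical in
noncomputable abbrev OML.trivialBSOML (α : Type*) [OML α] : BSOML α where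
  dia x := if x = ⊥ then ⊥ else ⊤
  S1 x := by by_cases h : x = ⊥ <;> simp [h]
  S2 := by simp
  S3 x := by
    by_cases h : x = ⊥
    · simp [h]
    · by_cases ht : (⊤ : α) = ⊥ <;> simp [h, ht]
  S4 x y := by
    by_cases hx : x = ⊥ <;> by_cases hy : y = ⊥ <;> simp [hx, hy, sup_eq_bot_iff]
  S5 x y := by by_cases h : x = ⊥ <;> simp [h, OML.compl_bot, OML.compl_top]
  S6 x y := by by_cases hy : y = ⊥ <;> by_cases hx : x = ⊥ <;> simp [hx, hy]
  S7 x y := by by_cases hx : x = ⊥ <;> simp [hx, OML.compl_bot, OML.compl_top]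

lemma OML.trivialBSOML_dia_mem {α : Type*} [OML α] (x : α) :
    (OML.trivialBSOML α).dia x ∈ ({⊥, ⊤} : Set α) := by
  classical
  show (if x = ⊥ then ⊥ else ⊤) ∈ _
  split_ifs <;> simp

lemma closedUnderOps_pair_bot_top {α : Type*} [OML α] : ClosedUnderOps ({⊥, ⊤} : Set α) := by
  refine ⟨by simp, by simp, ?_, ?_, ?_⟩
  · rintro a (rfl | rfl) <;> simp [OML.compl_bot, OML.compl_top]
  · rintro a (rfl | rfl) b (rfl | rfl) <;> simp
  · rintro a (rfl | rfl) b (rfl | rfl) <;> simp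

/-- Modal Kochen–Specker theorem: an orthomodular lattice `α` admits a global
valuation iff for every Boolean saturated modal extension (an embedding `e` of
`α` into a Boolean saturated orthomodular lattice `β`) and its possibility
space `PS` (the subalgebra of `β` generated by the `◇(e P)`), there is a
Boolean homomorphism `f` on `PS` admitting a compatible actualization, i.e. a
global valuation on `α` agreeing with `f` on each `Wᵢ ∩ ◇L`. -/
theorem stmt_14 {α : Type u} [OML α] :
    HasGlobalValuation α ↔
      ∀ (β : Type u) [BSOML β] (e : α → β),
        Function.Injective e →
        (∀ x y : α, e (x ⊓ y) = e x ⊓ e y) →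
        (∀ x y : α, e (x ⊔ y) = e x ⊔ e y) →
        (∀ x : α, e (OML.compl x) = OML.compl (e x)) →
        e ⊥ = ⊥ → e ⊤ = ⊤ →
        ∀ PS : Set β, ClosedUnderOps PS →
          {q : β | ∃ Q : α, q = BSOML.dia (e Q)} ⊆ PS →
          (∀ T : Set β, ClosedUnderOps T →
            {q : β | ∃ Q : α, q = BSOML.dia (e Q)} ⊆ T → PS ⊆ T) →
          ∃ f : β → Bool, IsHomOn PS f ∧
            ∃ v : ∀ W : Set α, IsBoolSub W → α → Bool,
              (∀ (W : Set α) (hW : IsBoolSub W), IsHomOn W (v W hW)) ∧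
              (∀ (W₁ W₂ : Set α) (h₁ : IsBoolSub W₁) (h₂ : IsBoolSub W₂)
                (x : α), x ∈ W₁ → x ∈ W₂ → v W₁ h₁ x = v W₂ h₂ x) ∧
              (∀ (W : Set α) (hW : IsBoolSub W) (x : α),
                x ∈ W → e x ∈ PS → v W hW x = f (e x)) := by
  constructor
  · rintro ⟨v, hv, hagree⟩ β _ e einj einf esup ecompl ebot etop PS hPS hdia hmin
    have he : IsOMLEmbedding e := ⟨einj, einf, esup, ecompl, ebot, etop⟩
    have hcent : ∀ p ∈ PS, central p :=
      hmin _ closedUnderOps_central (by rintro _ ⟨Q, rfl⟩; exact central_dia (e Q))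
    have hC := he.isBoolSub_preimage hPS hcent
    obtain ⟨f, hf, hcompat⟩ := he.exists_isHomOn_extend hPS hcent (hv _ hC)
    exact ⟨f, hf, v, hv, hagree, fun W hW x hxW hxPS =>
      (hagree W _ hW hC x hxW hxPS).trans (hcompat x hxPS)⟩
  · intro h
    let := OML.trivialBSOML α
    have hdia : {q : α | ∃ Q : α, q = BSOML.dia (id Q)} ⊆ {⊥, ⊤} := by
      rintro _ ⟨Q, rfl⟩
      exact OML.trivialBSOML_dia_mem Q
    obtain ⟨-, -, v, hv, hagree, -⟩ := h α id Function.injective_id (fun _ _ => rfl)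
      (fun _ _ => rfl) (fun _ => rfl) rfl rfl {⊥, ⊤} closedUnderOps_pair_bot_top hdia
      (fun T hT _ => Set.insert_subset hT.1 (Set.singleton_subset_iff.mpr hT.2.1))
    exact ⟨v, hv, hagree⟩
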